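/- arXiv:1811.12471 — 2 statements merged into one kernel-verified Lean document; each statement's English description precedes it below -/
import Mathlib

section
/- The family C5^-, obtained from C5 by deleting the function with values 0-1-1-1-0 at positions 0,1,2,3,4, satisfies ucs(C5^-) = 2. -/
/-- The family `C5`: a function `f : ZMod 5 → Bool` belongs to `C5` iff it takes the
values 1-0-0-1 on some four consecutive vertices of the pentagon. -/
def C5 : Set (ZMod 5 → Bool) :=
  {f | ∃ i : ZMod 5, f i = true ∧ f (i + 1) = false ∧ f (i + 2) = false ∧ f (i + 3) = true}

/-- A family `F` shatters a finite set `X` if every `{0,1}`-function on `X`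
has an extension in `F`. -/
def Shatters {B : Type*} (F : Set (B → Bool)) (X : Finset B) : Prop :=
  ∀ g : B → Bool, ∃ f ∈ F, ∀ x ∈ X, f x = g x

/-- The VC-dimension of a family: the size of the largest shattered set. -/
noncomputable def vcDim {B : Type*} (F : Set (B → Bool)) : ℕ :=
  sSup {n | ∃ X : Finset B, Shatters F X ∧ X.card = n}

/-- `g : B → Option Bool` (a partial function, with domain the set of points
where `g` is `some _`) is a partial function (trace) of the family `F` if some `f ∈ F`
extends it. -/
def IsPartialOf {B : Type*} (F : Set (B → Bool)) (g : B → Option Bool) : Prop :=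
  ∃ f ∈ F, ∀ x b, g x = some b → f x = b

/-- `F` admits an unlabeled compression scheme of size `k`: a pair `(α, β)` where `α`
maps every partial function `g` of `F` (with domain `S`) to a subset `α g ⊆ S` with
`|α g| ≤ k`, `β` maps every subset of the base set to a total function, and
`β (α g)` extends `g`. -/
def HasUCS {B : Type*} (F : Set (B → Bool)) (k : ℕ) : Prop :=
  ∃ (α : (B → Option Bool) → Finset B) (β : Finset B → (B → Bool)),
    ∀ g : B → Option Bool, IsPartialOf F g →
      (∀ x ∈ α g, (g x).isSome) ∧ (α g).card ≤ k ∧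
      (∀ x b, g x = some b → β (α g) x = b)

/-- The minimum size of an unlabeled compression scheme for `F`. -/
noncomputable def ucs {B : Type*} (F : Set (B → Bool)) : ℕ := sInf {k | HasUCS F k}

/-- `C5⁻`: `C5` with the function taking values 0-1-1-1-0 at 0,1,2,3,4 removed. -/
def C5minus : Set (ZMod 5 → Bool) :=
  C5 \ {fun x : ZMod 5 => decide (x = 1 ∨ x = 2 ∨ x = 3)}

/-!
Upper bound: a fixed decoder on the sixteen subsets of `ZMod 5` of size at most two reconstructs
every trace of `C5⁻` from a subset of its domain of size at most two; this is checked exhaustively.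
Lower bound: on total functions the compression map of a scheme is injective, since the decoder
recovers the function from it. `C5⁻` has nine members, but `ZMod 5` has only six subsets of size
at most one.
-/

section CompressionScheme

open Finset

variable {B : Type*} {F : Set (B → Bool)} {k m : ℕ}

theorem HasUCS.mono (h : HasUCS F k) (hkm : k ≤ m) : HasUCS F m := by
  obtain ⟨α, β, hαβ⟩ := h
  exact ⟨α, β, fun g hg =>
    ⟨(hαβ g hg).1, (hαβ g hg).2.1.trans hkm, (hαβ g hg).2.2⟩⟩

theorem ucs_eq_succ_of_hasUCS_of_not_hasUCS (h : HasUCS F (k + 1)) (h' : ¬HasUCS F k) :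
    ucs F = k + 1 :=
  (Nat.sInf_upward_closed_eq_succ_iff (fun _ _ hle hk => HasUCS.mono hk hle) k).2 ⟨h, h'⟩

theorem hasUCS_of_decoder [Fintype B] (β : Finset B → B → Bool)
    (hβ : ∀ f ∈ F, ∀ S : Finset B, ∃ T ⊆ S, T.card ≤ k ∧ ∀ x ∈ S, β T x = f x) :
    HasUCS F k := by
  classical
  let Good (g : B → Option Bool) (T : Finset B) : Prop :=
    (∀ x ∈ T, (g x).isSome) ∧ T.card ≤ k ∧ ∀ x b, g x = some b → β T x = b
  have exists_good : ∀ g, IsPartialOf F g → ∃ T, Good g T := by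
    rintro g ⟨f, hf, hfg⟩
    obtain ⟨T, hTS, hTk, hTf⟩ := hβ f hf {x | (g x).isSome}
    refine ⟨T, fun x hx => (mem_filter.1 (hTS hx)).2, hTk, fun x b hx => ?_⟩
    rw [hTf x (by simp [hx]), hfg x b hx]
  refine ⟨fun g => if h : ∃ T, Good g T then h.choose else ∅, β, fun g hg => ?_⟩
  have h := exists_good g hg
  simpa only [dif_pos h] using h.choose_spec

theorem HasUCS.card_le [Fintype B] (h : HasUCS F k) {s : Finset (B → Bool)} (hs : ↑s ⊆ F) :
    s.card ≤ #{T : Finset B | T.card ≤ k} := by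
  classical
  obtain ⟨α, β, hαβ⟩ := h
  let total (f : B → Bool) : B → Option Bool := fun x => some (f x)
  have spec : ∀ f ∈ s, (α (total f)).card ≤ k ∧ β (α (total f)) = f := fun f hf =>
    have hαβf := hαβ (total f) ⟨f, hs hf, fun _ _ => Option.some_inj.1⟩
    ⟨hαβf.2.1, funext fun x => hαβf.2.2 x (f x) rfl⟩
  refine card_le_card_of_injOn (fun f => α (total f))
    (fun f hf => mem_filter.2 ⟨mem_univ _, (spec f hf).1⟩) fun f hf f' hf' hff' => ?_
  rw [← (spec f hf).2, ← (spec f' hf').2]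
  exact congrArg β hff'

end CompressionScheme

def C5minusFinset : Finset (ZMod 5 → Bool) :=
  {![false, false, true, false, true], ![false, false, true, true, true],
    ![false, true, false, false, true], ![false, true, false, true, false],
    ![true, false, false, true, false], ![true, false, false, true, true],
    ![true, false, true, false, false], ![true, true, false, false, true],
    ![true, true, true, false, false]}

theorem C5minus_eq_coe_finset : C5minus = ↑C5minusFinset := by
  ext f
  show (∃ i : ZMod 5, f i = true ∧ f (i + 1) = false ∧ f (i + 2) = false ∧ f (i + 3) = true) ∧
    ¬f = (fun x : ZMod 5 => decide (x = 1 ∨ x = 2 ∨ x = 3)) ↔ f ∈ C5minusFinset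
  revert f
  decide

-- Sets of size at least three are never the compression of anything, so their value is arbitrary.
def C5minusDecoder (T : Finset (ZMod 5)) : ZMod 5 → Bool :=
  match decide (0 ∈ T), decide (1 ∈ T), decide (2 ∈ T), decide (3 ∈ T), decide (4 ∈ T) with
  | false, false, false, false, false => ![false, false, false, false, true]
  | true,  false, false, false, false => ![true,  false, false, false, true]
  | false, true,  false, false, false => ![false, true,  false, false, true]
  | false, false, true,  false, false => ![false, false, true,  false, false]
  | false, false, false, true,  false => ![false, false, false, true,  true]
  | false, false, false, false, true  => ![true,  false, false, false, false]
  | true,  true,  false, false, false => ![true,  true,  false, false, true]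
  | true,  false, true,  false, false => ![true,  false, true,  false, false]
  | true,  false, false, true,  false => ![true,  false, false, true,  true]
  | true,  false, false, false, true  => ![false, true,  false, true,  false]
  | false, true,  true,  false, false => ![true,  true,  true,  false, false]
  | false, true,  false, true,  false => ![false, true,  false, true,  false]
  | false, true,  false, false, true  => ![true,  true,  false, false, false]
  | false, false, true,  true,  false => ![false, false, true,  true,  true]
  | false, false, true,  false, true  => ![false, false, true,  false, true]
  | false, false, false, true,  true  => ![true,  false, false, true,  false]
  | _, _, _, _, _ => ![false, false, false, false, false]

theorem C5minusDecoder_spec : ∀ f ∈ C5minusFinset, ∀ S : Finset (ZMod 5),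
    ∃ T ⊆ S, T.card ≤ 2 ∧ ∀ x ∈ S, C5minusDecoder T x = f x := by
  decide

theorem hasUCS_C5minus_two : HasUCS C5minus 2 :=
  hasUCS_of_decoder C5minusDecoder (C5minus_eq_coe_finset ▸ C5minusDecoder_spec)

theorem not_hasUCS_C5minus_one : ¬HasUCS C5minus 1 := fun h =>
  absurd (h.card_le C5minus_eq_coe_finset.ge) (by decide)

/-- `ucs (C5⁻) = 2`. -/
theorem ucs_C5minus_eq_two : ucs C5minus = 2 :=
  ucs_eq_succ_of_hasUCS_of_not_hasUCS hasUCS_C5minus_two not_hasUCS_C5minus_one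
end

section
/- The join of C5 with the full family on one point satisfies ucs(C5 * P(1)) = 3. -/
/-- The join of two families, over the disjoint union of their base sets. -/
def famJoin {B1 B2 : Type*} (F : Set (B1 → Bool)) (G : Set (B2 → Bool)) :
    Set (B1 ⊕ B2 → Bool) :=
  {h | (fun x => h (Sum.inl x)) ∈ F ∧ (fun y => h (Sum.inr y)) ∈ G}

/-- `P 1`: the family of both functions on a one-element base set. -/
def P1 : Set (Unit → Bool) := Set.univ

/-!
Lower bound: if `F` shatters `X`, an unlabeled scheme must send the `2 ^ |X|` labellings of `X`
injectively to subsets of `X`, and with size `k < |X|` only the `2 ^ |X| - 1` proper subsets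
are available. The join of `C5` with `P1` shatters three points.

Upper bound: members of `C5` have at most three ones, at most three zeros, and the complement
of a member is never a member. Compress a sample of `(f, y)` to its visible ones when the new
point is unseen or labelled `1`; otherwise to the new point together with the visible zeros,
or, when all (hence exactly three) zeros are visible, to these zeros alone. A set without the
new point is decoded as zeros only if it is the three-element zero set of a member, and by the
complement condition the visible ones never form such a set.
-/

open scoped Finset

section General

variable {B : Type*}

theorem hasUCS_of_forall_exists_subset {F : Set (B → Bool)} {k : ℕ} (β : Finset B → B → Bool)
    (h : ∀ f ∈ F, ∀ D : Set B, ∃ S : Finset B, ↑S ⊆ D ∧ #S ≤ k ∧ ∀ x ∈ D, β S x = f x) :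
    HasUCS F k := by
  have hα : ∀ g : B → Option Bool, ∃ S : Finset B, IsPartialOf F g →
      (∀ x ∈ S, (g x).isSome) ∧ #S ≤ k ∧ ∀ x b, g x = some b → β S x = b := by
    intro g
    by_cases hg : IsPartialOf F g
    · obtain ⟨f, hf, hfg⟩ := hg
      obtain ⟨S, hSD, hSk, hβ⟩ := h f hf {x | (g x).isSome}
      refine ⟨S, fun _ => ⟨hSD, hSk, fun x b hx => ?_⟩⟩
      rw [hβ x (by simp [hx]), hfg x b hx]
    · exact ⟨∅, fun hg' => absurd hg' hg⟩
  choose α hα using hα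
  exact ⟨α, β, hα⟩

theorem card_le_of_hasUCS_of_shatters {F : Set (B → Bool)} {k : ℕ} {X : Finset B}
    (hF : HasUCS F k) (hX : Shatters F X) : #X ≤ k := by
  classical
  by_contra! hk
  obtain ⟨α, β, hαβ⟩ := hF
  let label (Y : Finset B) : B → Option Bool := fun x => if x ∈ X then some (x ∈ Y) else none
  have hpartial (Y : Finset B) : IsPartialOf F (label Y) := by
    obtain ⟨f, hf, hfY⟩ := hX (· ∈ Y)
    refine ⟨f, hf, fun x b hx => ?_⟩
    by_cases hxX : x ∈ X <;> simp_all [label]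
  have hmaps : Set.MapsTo (fun Y => α (label Y)) X.powerset (X.powerset.erase X) := by
    intro Y _
    obtain ⟨hdom, hcard, -⟩ := hαβ _ (hpartial Y)
    rw [Finset.mem_coe, Finset.mem_erase, Finset.mem_powerset]
    refine ⟨fun h : α (label Y) = X => hcard.not_gt (h ▸ hk), fun x hx => ?_⟩
    by_contra hxX
    simpa [label, hxX] using hdom x hx
  have hinj : Set.InjOn (fun Y => α (label Y)) X.powerset := by
    intro Y hY Y' hY' hYY'
    rw [Finset.mem_coe, Finset.mem_powerset] at hY hY'
    ext x
    by_cases hxX : x ∈ X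
    · have h := (hαβ _ (hpartial Y)).2.2 x (x ∈ Y) (by simp [label, hxX])
      have h' := (hαβ _ (hpartial Y')).2.2 x (x ∈ Y') (by simp [label, hxX])
      simp only at hYY'
      rw [hYY'] at h
      simpa using h.symm.trans h'
    · exact iff_of_false (fun h => hxX (hY h)) (fun h => hxX (hY' h))
  have := Finset.card_le_card_of_injOn _ hmaps hinj
  rw [Finset.card_erase_of_mem (Finset.mem_powerset_self X), Finset.card_powerset] at this
  have := Nat.one_le_two_pow (n := #X)
  omega

theorem shatters_famJoin {B' : Type*} {F : Set (B → Bool)} {G : Set (B' → Bool)}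
    {X : Finset B} {Y : Finset B'} (hF : Shatters F X) (hG : Shatters G Y) :
    Shatters (famJoin F G) (X.disjSum Y) := by
  intro g
  obtain ⟨f₁, hf₁, h₁⟩ := hF (g ∘ Sum.inl)
  obtain ⟨f₂, hf₂, h₂⟩ := hG (g ∘ Sum.inr)
  refine ⟨Sum.elim f₁ f₂, ⟨hf₁, hf₂⟩, ?_⟩
  rintro (x | y) hxy
  · exact h₁ x (Finset.inl_mem_disjSum.mp hxy)
  · exact h₂ y (Finset.inr_mem_disjSum.mp hxy)

theorem shatters_P1_univ : Shatters P1 Finset.univ := fun g => ⟨g, trivial, fun _ _ => rfl⟩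

end General

section JoinPoint

variable {B : Type*} [DecidableEq B] {F : Set (B → Bool)} {k : ℕ}

open Classical in
noncomputable def joinP1Decoder (F : Set (B → Bool)) (k : ℕ) (S : Finset (B ⊕ Unit)) :
    B ⊕ Unit → Bool :=
  if Sum.inr () ∈ S ∨ (#S.toLeft = k ∧ (fun x => decide (x ∉ S.toLeft)) ∈ F) then
    Sum.elim (fun x => decide (x ∉ S.toLeft)) fun _ => false
  else
    Sum.elim (fun x => decide (x ∈ S.toLeft)) fun _ => true

theorem joinP1Decoder_disjSum_univ (T : Finset B) :
    joinP1Decoder F k (T.disjSum Finset.univ) =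
      Sum.elim (fun x => decide (x ∉ T)) fun _ => false := by
  rw [joinP1Decoder, Finset.toLeft_disjSum,
    if_pos (Or.inl (Finset.inr_mem_disjSum.mpr (Finset.mem_univ _)))]

theorem joinP1Decoder_disjSum_empty_of_mem (T : Finset B) (hT : #T = k)
    (hF : (fun x => decide (x ∉ T)) ∈ F) :
    joinP1Decoder F k (T.disjSum ∅) = Sum.elim (fun x => decide (x ∉ T)) fun _ => false := by
  rw [joinP1Decoder, Finset.toLeft_disjSum, if_pos (Or.inr ⟨hT, hF⟩)]

theorem joinP1Decoder_disjSum_empty_of_notMem (T : Finset B)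
    (hF : #T = k → (fun x => decide (x ∉ T)) ∉ F) :
    joinP1Decoder F k (T.disjSum ∅) = Sum.elim (fun x => decide (x ∈ T)) fun _ => true := by
  rw [joinP1Decoder, Finset.toLeft_disjSum, if_neg]
  rintro (h | ⟨hT, hmem⟩)
  · simp at h
  · exact hF hT hmem

theorem hasUCS_famJoin_P1 [Fintype B] (hcard : ∀ f ∈ F, ∀ b, #{x | f x = b} ≤ k)
    (hcompl : ∀ f ∈ F, (fun x => !f x) ∉ F) : HasUCS (famJoin F P1) k := by
  classical
  refine hasUCS_of_forall_exists_subset (joinP1Decoder F k) fun f hf D => ?_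
  have hf₀ : (fun x => f (Sum.inl x)) ∈ F := hf.1
  let seen (b : Bool) : Finset B := {x | Sum.inl x ∈ D ∧ f (Sum.inl x) = b}
  have mem_seen {b : Bool} {x : B} (hx : Sum.inl x ∈ D) : x ∈ seen b ↔ f (Sum.inl x) = b := by
    simp [seen, hx]
  have seen_subset (b : Bool) : seen b ⊆ ({x | f (Sum.inl x) = b} : Finset B) := by
    intro x
    simp +contextual [seen]
  have seen_eq (b : Bool) (h : k ≤ #(seen b)) : seen b = ({x | f (Sum.inl x) = b} : Finset B) :=
    Finset.eq_of_subset_of_card_le (seen_subset b) ((hcard _ hf₀ b).trans h)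
  have card_seen_le (b : Bool) : #(seen b) ≤ k :=
    (Finset.card_le_card (seen_subset b)).trans (hcard _ hf₀ b)
  have disjSum_subset (b : Bool) {U : Finset Unit} (hU : ∀ u ∈ U, Sum.inr u ∈ D) :
      ↑((seen b).disjSum U) ⊆ D := by
    rintro (x | u) hx
    · exact (Finset.mem_filter.mp (Finset.inl_mem_disjSum.mp hx)).2.1
    · exact hU u (Finset.inr_mem_disjSum.mp hx)
  by_cases hpt : Sum.inr () ∈ D ∧ f (Sum.inr ()) = false
  · by_cases hsmall : #(seen false) < k
    · refine ⟨(seen false).disjSum Finset.univ, disjSum_subset false fun _ _ => hpt.1, ?_, ?_⟩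
      · simpa using hsmall
      · rw [joinP1Decoder_disjSum_univ]
        rintro (x | ⟨⟩) hx
        · simp [mem_seen hx]
        · exact hpt.2.symm
    · have hzeros : (fun x => decide (x ∉ seen false)) = fun x => f (Sum.inl x) := by
        ext x
        simp [seen_eq false (by omega)]
      refine ⟨(seen false).disjSum ∅, disjSum_subset false (by simp),
        by simpa using card_seen_le false, ?_⟩
      rw [joinP1Decoder_disjSum_empty_of_mem _ (by have := card_seen_le false; omega)
        (hzeros ▸ hf₀)]
      rintro (x | ⟨⟩) hx
      · simp [mem_seen hx]
      · exact hpt.2.symm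
  · refine ⟨(seen true).disjSum ∅, disjSum_subset true (by simp),
      by simpa using card_seen_le true, ?_⟩
    have hnot_zeros : #(seen true) = k → (fun x => decide (x ∉ seen true)) ∉ F := by
      intro hk
      convert hcompl _ hf₀ using 2
      simp [seen_eq true hk.ge]
    rw [joinP1Decoder_disjSum_empty_of_notMem _ hnot_zeros]
    rintro (x | ⟨⟩) hx
    · simp [mem_seen hx]
    · simpa [hx] using hpt

end JoinPoint

instance : DecidablePred (· ∈ C5) := fun f =>
  inferInstanceAs (Decidable (∃ i : ZMod 5,
    f i = true ∧ f (i + 1) = false ∧ f (i + 2) = false ∧ f (i + 3) = true))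

theorem card_filter_eq_le_three_of_mem_C5 : ∀ f ∈ C5, ∀ b, #{x | f x = b} ≤ 3 := by
  decide

theorem bnot_comp_notMem_C5 : ∀ f ∈ C5, (fun x => !f x) ∉ C5 := by
  decide

theorem shatters_C5_zero_one : Shatters C5 {0, 1} := by
  unfold Shatters
  decide

/-- `ucs (C5 * P 1) = 3`. -/
theorem ucs_join_C5_P1_eq_three : ucs (famJoin C5 P1) = 3 := by
  have hupper : HasUCS (famJoin C5 P1) 3 :=
    hasUCS_famJoin_P1 card_filter_eq_le_three_of_mem_C5 bnot_comp_notMem_C5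
  have hshatters : Shatters (famJoin C5 P1) (({0, 1} : Finset (ZMod 5)).disjSum Finset.univ) :=
    shatters_famJoin shatters_C5_zero_one shatters_P1_univ
  exact le_antisymm (Nat.sInf_le hupper)
    (le_csInf ⟨3, hupper⟩ fun _ hk => card_le_of_hasUCS_of_shatters hk hshatters)
end
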